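/- Let C(β) = (1/2)‖y − Xβ‖² + λ‖β‖₁ with λ > 0, β̂ a minimizer of C, β ∈ ℝ^p arbitrary, v ∈ ∂‖β‖₁, and sg = −Xᵀ(y − Xβ) + λv. Then ‖X(β̂ − β)‖² ≤ 2·‖sg‖·‖β̂ − β‖. -/

import Mathlib

/-!
Write `β̂ = β + r`. Expanding the square, the least-squares part of the lasso objective at `β + r`
exceeds its value at `β` by `-(Xᵀ(y - Xβ)) ⬝ r + ½‖Xr‖²`, and the subgradient inequality for the
`ℓ¹` norm bounds the penalty part from below by `λ (v ⬝ r)`. Hence `C(β + r) ≥ C(β) + sg ⬝ r + ½‖Xr‖²`,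
and minimality of `β̂` gives `½‖Xr‖² ≤ -(sg ⬝ r) ≤ ‖sg‖ ‖r‖` by Cauchy–Schwarz.
-/

open Matrix

theorem Real.sign_mul_self_eq_abs (r : ℝ) : Real.sign r * r = |r| := by
  rcases lt_trichotomy r 0 with hr | rfl | hr
  · rw [Real.sign_of_neg hr, abs_of_neg hr]; ring
  · simp
  · rw [Real.sign_of_pos hr, abs_of_pos hr, one_mul]

section Lasso

variable {m ι : Type*}

def IsL1Subgradient (β v : ι → ℝ) : Prop :=
  ∀ j, (β j ≠ 0 → v j = Real.sign (β j)) ∧ |v j| ≤ 1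

theorem IsL1Subgradient.abs_add_mul_le {β v : ι → ℝ} (hv : IsL1Subgradient β v) (r : ι → ℝ)
    (j : ι) : |β j| + v j * r j ≤ |β j + r j| := by
  have hvβ : v j * β j = |β j| := by
    by_cases hβ : β j = 0
    · simp [hβ]
    · rw [(hv j).1 hβ, Real.sign_mul_self_eq_abs]
  calc |β j| + v j * r j = v j * (β j + r j) := by rw [mul_add, hvβ]
    _ ≤ |v j| * |β j + r j| := (le_abs_self _).trans (abs_mul _ _).le
    _ ≤ |β j + r j| := mul_le_of_le_one_left (abs_nonneg _) (hv j).2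

variable [Fintype m] [Fintype ι]

noncomputable def lassoObjective (X : Matrix m ι ℝ) (y : m → ℝ) (lam : ℝ) (b : ι → ℝ) : ℝ :=
  (1/2) * (∑ i, (y i - (X *ᵥ b) i) ^ 2) + lam * ∑ j, |b j|

theorem IsL1Subgradient.sum_abs_add_dotProduct_le {β v : ι → ℝ} (hv : IsL1Subgradient β v)
    (r : ι → ℝ) : ∑ j, |β j| + v ⬝ᵥ r ≤ ∑ j, |(β + r) j| := by
  rw [dotProduct, ← Finset.sum_add_distrib]
  exact Finset.sum_le_sum fun j _ => hv.abs_add_mul_le r j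

theorem sum_sq_sub_mulVec_add (X : Matrix m ι ℝ) (y : m → ℝ) (β r : ι → ℝ) :
    ∑ i, (y i - (X *ᵥ (β + r)) i) ^ 2 =
      ∑ i, (y i - (X *ᵥ β) i) ^ 2 - 2 * (Xᵀ *ᵥ (y - X *ᵥ β)) ⬝ᵥ r + ∑ i, ((X *ᵥ r) i) ^ 2 := by
  have hcross : (Xᵀ *ᵥ (y - X *ᵥ β)) ⬝ᵥ r = (y - X *ᵥ β) ⬝ᵥ (X *ᵥ r) := by
    rw [mulVec_transpose, dotProduct_mulVec]
  rw [hcross, dotProduct, Finset.mul_sum, ← Finset.sum_sub_distrib, ← Finset.sum_add_distrib]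
  refine Finset.sum_congr rfl fun i _ => ?_
  simp only [mulVec_add, Pi.add_apply, Pi.sub_apply]
  ring

theorem lassoObjective_add_ge {X : Matrix m ι ℝ} {y : m → ℝ} {lam : ℝ} (hlam : 0 ≤ lam)
    {β v : ι → ℝ} (hv : IsL1Subgradient β v) (r : ι → ℝ) :
    lassoObjective X y lam β + (-(Xᵀ *ᵥ (y - X *ᵥ β)) + lam • v) ⬝ᵥ r +
        (1/2) * ∑ i, ((X *ᵥ r) i) ^ 2 ≤ lassoObjective X y lam (β + r) := by
  have hpen := mul_le_mul_of_nonneg_left (hv.sum_abs_add_dotProduct_le r) hlam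
  rw [lassoObjective, lassoObjective, sum_sq_sub_mulVec_add, add_dotProduct, neg_dotProduct,
    smul_dotProduct, smul_eq_mul]
  linarith

end Lasso

/-- Bound on the fit difference at an approximate stationary point:
`‖X(β̂ - β)‖² ≤ 2 ‖sg‖ ‖β̂ - β‖`. -/
theorem lasso_fit_difference_bound {n p : ℕ}
    (X : Matrix (Fin n) (Fin p) ℝ) (y : Fin n → ℝ) (lam : ℝ) (hlam : 0 < lam)
    (βhat β v : Fin p → ℝ)
    (hmin : ∀ b : Fin p → ℝ,
      (1/2) * (∑ i, (y i - X.mulVec βhat i)^2) + lam * ∑ j, |βhat j| ≤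
      (1/2) * (∑ i, (y i - X.mulVec b i)^2) + lam * ∑ j, |b j|)
    (hv : ∀ j, (β j ≠ 0 → v j = Real.sign (β j)) ∧ |v j| ≤ 1) :
    (∑ i, (X.mulVec (βhat - β) i)^2) ≤
      2 * Real.sqrt (∑ j, ((- Xᵀ.mulVec (y - X.mulVec β) + lam • v) j)^2) *
        Real.sqrt (∑ j, (βhat j - β j)^2) := by
  set sg := -(Xᵀ *ᵥ (y - X *ᵥ β)) + lam • v
  set r := βhat - β
  have hopt : lassoObjective X y lam βhat ≤ lassoObjective X y lam β := hmin β
  have hgrowth : lassoObjective X y lam β + sg ⬝ᵥ r + (1/2) * ∑ i, ((X *ᵥ r) i) ^ 2 ≤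
      lassoObjective X y lam βhat := by
    simpa only [r, add_sub_cancel] using lassoObjective_add_ge (X := X) (y := y) hlam.le hv r
  have hcs : -(sg ⬝ᵥ r) ≤ √(∑ j, sg j ^ 2) * √(∑ j, (βhat j - β j) ^ 2) := by
    simpa [dotProduct, r] using Real.sum_mul_le_sqrt_mul_sqrt Finset.univ (-sg) r
  linarith
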